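/- arXiv:math/0010226 — 5 statements merged into one kernel-verified Lean document; each statement's English description precedes it below -/
import Mathlib

section
/- Let A be a commutative ring, n ≥ 3, and let φ: Um_n(A) → G be a map to an abelian group satisfying MS1 (invariance under right multiplication by elementary matrices) and MS4 (φ(f²,a_2,...,a_n)·φ(g,a_2,...,a_n) = φ(f²g,a_2,...,a_n) whenever all rows involved are unimodular). Then φ satisfies MS3 (φ(x,a)·φ(y,a) = φ(xy,a) whenever x+y=1) if and only if φ satisfies MS5 (φ(r,a)·φ(1+q,a) = φ(q,a) whenever r(1+q) ≡ q mod (a_2,...,a_n)). -/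
/-!
By MS1, adding multiples of `a₂, …, aₙ` to the first entry does not change `φ`, so on
unimodular rows `φ (x, a)` only depends on the class of `x`, a unit of `R = A / (a₂, …, aₙ)`.
For the induced function `ψ` on `R`, MS4 reads `ψ (f²) ψ g = ψ (f² g)`, MS3 reads
`ψ u ψ (1 - u) = ψ (u (1 - u))` and MS5 reads `ψ r ψ (1 + q) = ψ q` for `r (1 + q) = q`.
Put `s = (1 + q)⁻¹`: then `r = 1 - s`, `s (1 - s) = s² q` and `ψ s = ψ (s²) ψ (1 + q)`, so MS5
for `(r, q)` multiplied by `ψ (s²)` is MS3 for `(s, 1 - s)`.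
-/

open Matrix

/-- A row is unimodular if its entries generate the unit ideal. -/
def Unim {A : Type*} [CommRing A] {ι : Type*} (v : ι → A) : Prop :=
  Ideal.span (Set.range v) = ⊤

/-- The subgroup of elementary matrices, realized as the multiplicative closure of the
set of transvections (elementary matrices `e_ij(c)`, `i ≠ j`); since the inverse of a
transvection is a transvection, this closure coincides with the elementary group. -/
def ElemMats (ι : Type*) (A : Type*) [Fintype ι] [DecidableEq ι] [CommRing A] :
    Submonoid (Matrix ι ι A) :=
  Submonoid.closure {M | ∃ i j c, i ≠ j ∧ M = Matrix.transvection i j c}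

section UnitRelations

variable {R G : Type*} [CommRing R] [CommGroup G] (ψ : R → G)

theorem forall_mul_of_add_eq_one_iff_forall_mul_one_add
    (hsq : ∀ f g : R, IsUnit f → IsUnit g → ψ (f ^ 2) * ψ g = ψ (f ^ 2 * g)) :
    (∀ x y : R, x + y = 1 → IsUnit x → IsUnit y → ψ x * ψ y = ψ (x * y)) ↔
    (∀ r q : R, IsUnit r → IsUnit (1 + q) → IsUnit q → r * (1 + q) = q →
      ψ r * ψ (1 + q) = ψ q) := by
  constructor
  · intro h3 r q hr hq₁ hq hrq
    obtain ⟨s, hs⟩ := hq₁.exists_left_inv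
    have hsu : IsUnit s := .of_mul_eq_one _ hs
    have hsr : ψ s * ψ r = ψ (s ^ 2) * ψ q := by
      rw [h3 s r (by linear_combination s * hrq + (1 - r) * hs) hsu hr, hsq s q hsu hq]
      congr 1
      linear_combination s ^ 2 * hrq - s * r * hs
    have hs₁ : ψ (s ^ 2) * ψ (1 + q) = ψ s := by
      rw [hsq s (1 + q) hsu hq₁]
      congr 1
      linear_combination s * hs
    apply mul_left_cancel (a := ψ (s ^ 2))
    rw [← hsr, ← hs₁, mul_right_comm, mul_assoc]
  · intro h5 x y hxy hx hy
    obtain ⟨x', hx'⟩ := hx.exists_right_inv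
    have hx'u : IsUnit x' := .of_mul_eq_one_right _ hx'
    -- With `q = y x'` we have `1 + q = x⁻¹`, and MS5 applies to the pair `(y, q)`.
    have h1q : 1 + y * x' = x' := by linear_combination x' * hxy - hx'
    have h5' := h5 y (y * x') hy (by rwa [h1q]) (hy.mul hx'u) (by rw [h1q])
    rw [h1q] at h5'
    have hx₁ : ψ (x ^ 2) * ψ x' = ψ x := by
      rw [hsq x x' hx hx'u]
      congr 1
      linear_combination x * hx'
    calc ψ x * ψ y = ψ (x ^ 2) * (ψ y * ψ x') := by rw [← hx₁, mul_right_comm, mul_assoc]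
      _ = ψ (x * y) := by
        rw [h5', hsq x _ hx (hy.mul hx'u)]
        congr 1
        linear_combination x * y * hx'

end UnitRelations

section Rows

variable {A : Type*} [CommRing A] {n : ℕ}

local notation "π" a => Ideal.Quotient.mk (Ideal.span (Set.range a))

theorem unim_cons_iff_isUnit_mk {x : A} {a : Fin n → A} :
    Unim (Fin.cons x a : Fin (n + 1) → A) ↔ IsUnit ((π a) x) := by
  rw [Unim, Fin.range_cons, Ideal.span_insert, Ideal.eq_top_iff_one,
    Ideal.mem_span_singleton_sup, isUnit_iff_exists_inv,
    (Ideal.Quotient.mk_surjective (I := Ideal.span (Set.range a))).exists]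
  simp only [← map_mul, ← map_one (π a), Ideal.Quotient.eq]
  constructor
  · rintro ⟨u, b, hb, hub⟩
    exact ⟨u, by rwa [← hub, mul_comm, sub_add_cancel_left, neg_mem_iff]⟩
  · rintro ⟨u, hu⟩
    exact ⟨u, -(x * u - 1), neg_mem hu, by ring⟩

theorem vecMul_cons_transvection_succ_zero (x c : A) (a : Fin n → A) (i : Fin n) :
    vecMul (Fin.cons x a) (transvection i.succ 0 c) = Fin.cons (x + a i * c) a := by
  funext k
  rw [transvection, vecMul_add, vecMul_one]
  cases k using Fin.cases with
  | zero => simp [vecMul, dotProduct, Matrix.single]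
  | succ j => simp [vecMul, dotProduct, Matrix.single, (Fin.succ_ne_zero j).symm]

variable {G : Type*}

def ElemInvariant (φ : (Fin (n + 1) → A) → G) : Prop :=
  ∀ v : Fin (n + 1) → A, Unim v → ∀ ε ∈ ElemMats (Fin (n + 1)) A, φ (vecMul v ε) = φ v

/-- `φ (x, a)` as a function of the class of `x` modulo `(a)`, read off at the representative
chosen by `Quotient.out`. -/
noncomputable def firstEntryFun (φ : (Fin (n + 1) → A) → G) (a : Fin n → A) :
    A ⧸ Ideal.span (Set.range a) → G :=
  fun z => φ (Fin.cons z.out a)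

namespace ElemInvariant

variable {φ : (Fin (n + 1) → A) → G}

theorem apply_cons_add_of_mem (hφ : ElemInvariant φ) {a : Fin n → A} {x t : A}
    (ht : t ∈ Ideal.span (Set.range a)) (hx : Unim (Fin.cons x a : Fin (n + 1) → A)) :
    φ (Fin.cons (x + t) a) = φ (Fin.cons x a) := by
  obtain ⟨c, rfl⟩ := Ideal.mem_span_range_iff_exists_fun.mp ht
  refine (Finset.sum_induction _ (fun t => t ∈ Ideal.span (Set.range a) ∧
    ∀ y, Unim (Fin.cons y a : Fin (n + 1) → A) → φ (Fin.cons (y + t) a) = φ (Fin.cons y a))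
    ?_ ?_ ?_).2 x hx
  · rintro t₁ t₂ ⟨ht₁, h₁⟩ ⟨ht₂, h₂⟩
    refine ⟨add_mem ht₁ ht₂, fun y hy => ?_⟩
    have hy₁ : Unim (Fin.cons (y + t₁) a : Fin (n + 1) → A) := by
      rwa [unim_cons_iff_isUnit_mk, map_add, Ideal.Quotient.eq_zero_iff_mem.mpr ht₁, add_zero,
        ← unim_cons_iff_isUnit_mk]
    rw [← add_assoc, h₂ _ hy₁, h₁ _ hy]
  · simp
  · intro i _
    refine ⟨Ideal.mul_mem_left _ _ (Ideal.subset_span ⟨i, rfl⟩), fun y hy => ?_⟩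
    rw [mul_comm, ← vecMul_cons_transvection_succ_zero]
    exact hφ _ hy _ (Submonoid.subset_closure ⟨_, _, _, Fin.succ_ne_zero i, rfl⟩)

theorem apply_cons_eq (hφ : ElemInvariant φ) {a : Fin n → A} {x : A} (hx : IsUnit ((π a) x)) :
    φ (Fin.cons x a) = firstEntryFun φ a ((π a) x) := by
  have h := hφ.apply_cons_add_of_mem (Ideal.Quotient.eq.mp (Ideal.Quotient.mk_out ((π a) x)))
    (unim_cons_iff_isUnit_mk.mpr hx)
  rw [add_sub_cancel] at h
  exact h.symm

variable [CommGroup G]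

theorem firstEntryFun_sq_mul (hφ : ElemInvariant φ) (a : Fin n → A)
    (h4 : ∀ f g : A, Unim (Fin.cons (f ^ 2) a : Fin (n + 1) → A) →
      Unim (Fin.cons g a : Fin (n + 1) → A) → Unim (Fin.cons (f ^ 2 * g) a : Fin (n + 1) → A) →
      φ (Fin.cons (f ^ 2) a) * φ (Fin.cons g a) = φ (Fin.cons (f ^ 2 * g) a))
    (f g : A ⧸ Ideal.span (Set.range a)) (hf : IsUnit f) (hg : IsUnit g) :
    firstEntryFun φ a (f ^ 2) * firstEntryFun φ a g = firstEntryFun φ a (f ^ 2 * g) := by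
  obtain ⟨f, rfl⟩ := Ideal.Quotient.mk_surjective f
  obtain ⟨g, rfl⟩ := Ideal.Quotient.mk_surjective g
  have hf₂ : IsUnit ((π a) (f ^ 2)) := by rw [map_pow]; exact hf.pow 2
  have hf₂g : IsUnit ((π a) (f ^ 2 * g)) := by rw [map_mul]; exact hf₂.mul hg
  rw [← map_pow, ← map_mul, ← hφ.apply_cons_eq hf₂, ← hφ.apply_cons_eq hg,
    ← hφ.apply_cons_eq hf₂g]
  simp only [unim_cons_iff_isUnit_mk] at h4
  exact h4 f g hf₂ hg hf₂g

theorem forall_mul_of_add_eq_one_iff (hφ : ElemInvariant φ) (a : Fin n → A) :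
    (∀ x y : A, x + y = 1 → Unim (Fin.cons x a : Fin (n + 1) → A) →
      Unim (Fin.cons y a : Fin (n + 1) → A) → Unim (Fin.cons (x * y) a : Fin (n + 1) → A) →
      φ (Fin.cons x a) * φ (Fin.cons y a) = φ (Fin.cons (x * y) a)) ↔
    (∀ x y : A ⧸ Ideal.span (Set.range a), x + y = 1 → IsUnit x → IsUnit y →
      firstEntryFun φ a x * firstEntryFun φ a y = firstEntryFun φ a (x * y)) := by
  simp only [unim_cons_iff_isUnit_mk]
  constructor
  · intro h x y hxy hx hy
    obtain ⟨x, rfl⟩ := Ideal.Quotient.mk_surjective x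
    obtain rfl : y = (π a) (1 - x) := by rw [map_sub, map_one, ← hxy, add_sub_cancel_left]
    have hxy' : IsUnit ((π a) (x * (1 - x))) := by rw [map_mul]; exact hx.mul hy
    rw [← map_mul, ← hφ.apply_cons_eq hx, ← hφ.apply_cons_eq hy, ← hφ.apply_cons_eq hxy']
    exact h x (1 - x) (add_sub_cancel x 1) hx hy hxy'
  · intro h x y hxy hx hy hxy'
    rw [hφ.apply_cons_eq hx, hφ.apply_cons_eq hy, hφ.apply_cons_eq hxy', map_mul]
    exact h _ _ (by rw [← map_add, hxy, map_one]) hx hy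

theorem forall_mul_one_add_iff (hφ : ElemInvariant φ) (a : Fin n → A) :
    (∀ r q : A, Unim (Fin.cons r a : Fin (n + 1) → A) →
      Unim (Fin.cons (1 + q) a : Fin (n + 1) → A) → Unim (Fin.cons q a : Fin (n + 1) → A) →
      r * (1 + q) - q ∈ Ideal.span (Set.range a) →
      φ (Fin.cons r a) * φ (Fin.cons (1 + q) a) = φ (Fin.cons q a)) ↔
    (∀ r q : A ⧸ Ideal.span (Set.range a), IsUnit r → IsUnit (1 + q) → IsUnit q →
      r * (1 + q) = q →
      firstEntryFun φ a r * firstEntryFun φ a (1 + q) = firstEntryFun φ a q) := by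
  simp only [unim_cons_iff_isUnit_mk, ← Ideal.Quotient.eq, map_mul, map_add, map_one]
  constructor
  · intro h r q hr hq₁ hq hrq
    obtain ⟨r, rfl⟩ := Ideal.Quotient.mk_surjective r
    obtain ⟨q, rfl⟩ := Ideal.Quotient.mk_surjective q
    have e := h r q hr hq₁ hq hrq
    rwa [hφ.apply_cons_eq hr, hφ.apply_cons_eq hq, hφ.apply_cons_eq (by rwa [map_add, map_one]),
      map_add, map_one] at e
  · intro h r q hr hq₁ hq hrq
    rw [hφ.apply_cons_eq hr, hφ.apply_cons_eq hq, hφ.apply_cons_eq (by rwa [map_add, map_one]),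
      map_add, map_one]
    exact h _ _ hr hq₁ hq hrq

end ElemInvariant

end Rows

theorem stmt1_general {A G : Type*} [CommRing A] [CommGroup G] {n : ℕ}
    (φ : (Fin (n + 1) → A) → G)
    (hMS1 : ∀ v : Fin (n + 1) → A, Unim v → ∀ ε ∈ ElemMats (Fin (n + 1)) A,
      φ (Matrix.vecMul v ε) = φ v)
    (hMS4 : ∀ (f g : A) (a : Fin n → A), Unim (Fin.cons (f ^ 2) a) → Unim (Fin.cons g a) →
      Unim (Fin.cons (f ^ 2 * g) a) →
      φ (Fin.cons (f ^ 2) a) * φ (Fin.cons g a) = φ (Fin.cons (f ^ 2 * g) a)) :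
    (∀ (x y : A) (a : Fin n → A), x + y = 1 →
        Unim (Fin.cons x a) → Unim (Fin.cons y a) → Unim (Fin.cons (x * y) a) →
        φ (Fin.cons x a) * φ (Fin.cons y a) = φ (Fin.cons (x * y) a)) ↔
    (∀ (r q : A) (a : Fin n → A),
        Unim (Fin.cons r a) → Unim (Fin.cons (1 + q) a) → Unim (Fin.cons q a) →
        r * (1 + q) - q ∈ Ideal.span (Set.range a) →
        φ (Fin.cons r a) * φ (Fin.cons (1 + q) a) = φ (Fin.cons q a)) := by
  have key : ∀ a : Fin n → A, _ ↔ _ := fun a =>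
    (ElemInvariant.forall_mul_of_add_eq_one_iff hMS1 a).trans
      ((forall_mul_of_add_eq_one_iff_forall_mul_one_add _ (ElemInvariant.firstEntryFun_sq_mul hMS1 a
        fun f g => hMS4 f g a)).trans (ElemInvariant.forall_mul_one_add_iff hMS1 a).symm)
  exact ⟨fun h3 r q a => (key a).1 (fun x y => h3 x y a) r q,
    fun h5 x y a => (key a).2 (fun r q => h5 r q a) x y⟩

/-- for a map `φ` on unimodular rows of length `n ≥ 3` with values in an
abelian group satisfying MS1 and MS4, relations MS3 and MS5 are equivalent. -/
theorem stmt1 {A G : Type*} [CommRing A] [CommGroup G] {n : ℕ} (hn : 3 ≤ n + 1)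
    (φ : (Fin (n + 1) → A) → G)
    (hMS1 : ∀ v : Fin (n + 1) → A, Unim v → ∀ ε ∈ ElemMats (Fin (n + 1)) A,
      φ (Matrix.vecMul v ε) = φ v)
    (hMS4 : ∀ (f g : A) (a : Fin n → A), Unim (Fin.cons (f ^ 2) a) → Unim (Fin.cons g a) →
      Unim (Fin.cons (f ^ 2 * g) a) →
      φ (Fin.cons (f ^ 2) a) * φ (Fin.cons g a) = φ (Fin.cons (f ^ 2 * g) a)) :
    (∀ (x y : A) (a : Fin n → A), x + y = 1 →
        Unim (Fin.cons x a) → Unim (Fin.cons y a) → Unim (Fin.cons (x * y) a) →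
        φ (Fin.cons x a) * φ (Fin.cons y a) = φ (Fin.cons (x * y) a)) ↔
    (∀ (r q : A) (a : Fin n → A),
        Unim (Fin.cons r a) → Unim (Fin.cons (1 + q) a) → Unim (Fin.cons q a) →
        r * (1 + q) - q ∈ Ideal.span (Set.range a) →
        φ (Fin.cons r a) * φ (Fin.cons (1 + q) a) = φ (Fin.cons q a)) :=
  stmt1_general φ hMS1 hMS4
end

section
/- Let A be a commutative ring and n even. Then every unimodular row v ∈ Um_n(A) is the first row of a unimodular 2×n matrix over A. Concretely, if (b_1,...,b_n) is such that Σ a_i b_i = 1 for v = (a_1,...,a_n), then the 2×n matrix with first row (a_1,...,a_n) and second row (-b_2, b_1, -b_4, b_3, ..., -b_n, b_{n-1}) is unimodular. -/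
open Matrix

/-!
Pair the coordinates as `(2k, 2k+1)` and let `J` send `v` to the vector with blocks
`(-v (2k+1), v (2k))`, i.e. apply the standard symplectic form blockwise. Then `v ⬝ J v = 0`
blockwise, and `J v ⬝ J w = v ⬝ w`. Hence the matrix with rows `a, J b` has the right inverse
with columns `b, J a`: the entries are `a ⬝ b = 1`, `a ⬝ J a = 0`, `J b ⬝ b = 0`, `J b ⬝ J a = 1`.
-/

theorem Fin.sum_univ_two_mul {M : Type*} [AddCommMonoid M] {m : ℕ} (f : Fin (2 * m) → M) :
    ∑ j, f j = ∑ k : Fin m, (f ⟨2 * k, by omega⟩ + f ⟨2 * k + 1, by omega⟩) := by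
  rw [← Equiv.sum_comp (finProdFinEquiv.trans (finCongr (mul_comm m 2))) f,
    Fintype.sum_prod_type]
  refine Finset.sum_congr rfl fun k _ => ?_
  rw [Fin.sum_univ_two]
  congr 1 <;> congr 1 <;> ext <;> simp [add_comm]

section Symplectic

variable {A : Type*} [CommRing A] {m : ℕ}

def symplecticPartner (v : Fin (2 * m) → A) : Fin (2 * m) → A := fun j =>
  if h : (j : ℕ) % 2 = 0 then -v ⟨(j : ℕ) + 1, by grind⟩
  else v ⟨(j : ℕ) - 1, (Nat.sub_le _ _).trans_lt j.2⟩

theorem symplecticPartner_even (v : Fin (2 * m) → A) (k : Fin m) :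
    symplecticPartner v ⟨2 * k, by omega⟩ = -v ⟨2 * k + 1, by omega⟩ :=
  dif_pos (by simp)

theorem symplecticPartner_odd (v : Fin (2 * m) → A) (k : Fin m) :
    symplecticPartner v ⟨2 * k + 1, by omega⟩ = v ⟨2 * k, by omega⟩ :=
  dif_neg (by simp [Nat.add_mod])

theorem dotProduct_symplecticPartner_self (v : Fin (2 * m) → A) :
    v ⬝ᵥ symplecticPartner v = 0 := by
  rw [dotProduct, Fin.sum_univ_two_mul]
  refine Finset.sum_eq_zero fun k _ => ?_
  rw [symplecticPartner_even, symplecticPartner_odd]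
  ring

theorem symplecticPartner_dotProduct_self (v : Fin (2 * m) → A) :
    symplecticPartner v ⬝ᵥ v = 0 := by
  rw [dotProduct_comm, dotProduct_symplecticPartner_self]

theorem symplecticPartner_dotProduct_symplecticPartner (v w : Fin (2 * m) → A) :
    symplecticPartner v ⬝ᵥ symplecticPartner w = v ⬝ᵥ w := by
  simp only [dotProduct, Fin.sum_univ_two_mul, symplecticPartner_even, symplecticPartner_odd]
  exact Finset.sum_congr rfl fun k _ => by ring

end Symplectic

theorem Matrix.of_rows_mul_of_cols {n A : Type*} [Fintype n] [NonUnitalNonAssocSemiring A] (u w x y : n → A) :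
    of ![u, w] * of (fun j => ![x j, y j]) = !![u ⬝ᵥ x, u ⬝ᵥ y; w ⬝ᵥ x, w ⬝ᵥ y] := by
  ext i j
  fin_cases i <;> fin_cases j <;> rfl

theorem Matrix.of_ite_fin_two {n A : Type*} (u w : n → A) :
    (of fun i : Fin 2 => fun j => if i = 0 then u j else w j) = of ![u, w] := by
  ext i j
  fin_cases i <;> rfl

/-- Bass: for even length `n = 2m`, a unimodular row `a` with
`∑ aᵢbᵢ = 1` is the first row of the unimodular `2 × n` matrix whose second row is
`(-b₂, b₁, -b₄, b₃, …, -bₙ, b_{n-1})` (indices written 1-based; here 0-based: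
entry `2k` is `-b (2k+1)` and entry `2k+1` is `b (2k)`). -/
theorem stmt4 {A : Type*} [CommRing A] {m : ℕ}
    (a b : Fin (2 * m) → A) (hab : ∑ i, a i * b i = 1) :
    ∃ N : Matrix (Fin (2 * m)) (Fin 2) A,
      (Matrix.of fun i : Fin 2 => fun j : Fin (2 * m) =>
        if i = 0 then a j
        else if h : (j : ℕ) % 2 = 0 then
          -b ⟨(j : ℕ) + 1, by have := j.isLt; omega⟩
        else
          b ⟨(j : ℕ) - 1, by have := j.isLt; omega⟩) * N = 1 := by
  refine ⟨of fun j => ![b j, symplecticPartner a j], ?_⟩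
  change (of fun i : Fin 2 => fun j => if i = 0 then a j else symplecticPartner b j) * _ =
    (1 : Matrix (Fin 2) (Fin 2) A)
  have hab_dot : a ⬝ᵥ b = 1 := hab
  rw [of_ite_fin_two, of_rows_mul_of_cols, hab_dot, dotProduct_symplecticPartner_self,
    symplecticPartner_dotProduct_self, symplecticPartner_dotProduct_symplecticPartner,
    dotProduct_comm, hab_dot, one_fin_two]
end

section
/- Let A be a commutative ring, m < n, T ∈ GL_m(A), and M ∈ Um_{m,n}(A) a unimodular m×n matrix with right inverse N. Then TM = M(I_n + N(T - I_m)M), and the matrices I_n + N(T-I_m)M and T ⊥ I_{n-m} (block sum) lie in the same coset of E_{m+n}(A) inside GL_{m+n}(A) when stably embedded; in particular TM and M(T ⊥ I_{n-m}) are in the same orbit under GL_n(A) ∩ E_{m+n}(A) acting by right multiplication. -/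
/-!
Apply Vaserstein's lemma twice. With `α = N`, `β = (T - 1) M` one has `1 + β α = T`, so
`(1 + N (T - 1) M) ⊥ T⁻¹` is elementary; with `α = (T⁻¹ - 1) ⊕ 0`, `β = (1 | 0)` one has
`1 + α β = T⁻¹ ⊥ 1` and `1 + β α = T⁻¹`, so `(T⁻¹ ⊥ 1) ⊥ T` is elementary. Their product is
`g ⊥ 1` with `g = (T⁻¹ ⊥ 1)(1 + N (T - 1) M)`, and `T M = M (T ⊥ 1) g`;
`g` is invertible because elementary matrices have determinant `1`.
-/

open Matrix

namespace Matrix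

variable {A p q : Type*} [CommRing A] [DecidableEq p] [DecidableEq q]

theorem fromBlocks_one_single_zero_one (i : p) (j : q) (c : A) :
    fromBlocks 1 (single i j c) 0 (1 : Matrix q q A) = transvection (.inl i) (.inr j) c := by
  ext (a | a) (b | b) <;> simp [transvection, single, one_apply, and_comm]

theorem fromBlocks_one_zero_single_one (i : q) (j : p) (c : A) :
    fromBlocks 1 0 (single i j c) (1 : Matrix q q A) = transvection (.inr i) (.inl j) c := by
  ext (a | a) (b | b) <;> simp [transvection, single, one_apply, and_comm]

theorem mul_eq_mul_one_add_mul_sub_one_mul [Fintype p] [Fintype q] {M : Matrix p q A}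
    {N : Matrix q p A} (hMN : M * N = 1) (T : Matrix p p A) :
    T * M = M * (1 + N * (T - 1) * M) := by
  rw [Matrix.mul_add, Matrix.mul_one, ← Matrix.mul_assoc, ← Matrix.mul_assoc, hMN,
    Matrix.one_mul, Matrix.sub_mul, Matrix.one_mul, add_sub_cancel]

end Matrix

namespace ElemMats

variable {A : Type*} [CommRing A]

theorem det_eq_one {ι : Type*} [Fintype ι] [DecidableEq ι] {E : Matrix ι ι A}
    (hE : E ∈ ElemMats ι A) : E.det = 1 := by
  induction hE using Submonoid.closure_induction with
  | mem _ h => obtain ⟨i, j, c, hij, rfl⟩ := h; exact det_transvection_of_ne _ _ hij c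
  | one => exact det_one
  | mul _ _ _ _ h₁ h₂ => rw [det_mul, h₁, h₂, one_mul]

variable {p q : Type*} [Fintype p] [Fintype q] [DecidableEq p] [DecidableEq q]

theorem isUnit_of_fromBlocks_mem {g : Matrix p p A}
    (hg : fromBlocks g 0 0 (1 : Matrix q q A) ∈ ElemMats (p ⊕ q) A) : IsUnit g := by
  have hdet := det_eq_one hg
  rw [det_fromBlocks_zero₂₁, det_one, mul_one] at hdet
  exact (isUnit_iff_isUnit_det g).2 (hdet ▸ isUnit_one)

theorem fromBlocks_unipotent_upper_mem (X : Matrix p q A) :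
    fromBlocks 1 X 0 (1 : Matrix q q A) ∈ ElemMats (p ⊕ q) A := by
  induction X using Matrix.induction_on' with
  | h_zero => simp
  | h_add X Y hX hY =>
    convert mul_mem hX hY using 1
    simp [fromBlocks_multiply, add_comm]
  | h_std_basis i j c =>
    exact Submonoid.subset_closure
      ⟨_, _, c, Sum.inl_ne_inr, fromBlocks_one_single_zero_one i j c⟩

theorem fromBlocks_unipotent_lower_mem (X : Matrix q p A) :
    fromBlocks 1 0 X (1 : Matrix q q A) ∈ ElemMats (p ⊕ q) A := by
  induction X using Matrix.induction_on' with
  | h_zero => simp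
  | h_add X Y hX hY =>
    convert mul_mem hX hY using 1
    simp [fromBlocks_multiply, add_comm]
  | h_std_basis i j c =>
    exact Submonoid.subset_closure
      ⟨_, _, c, Sum.inr_ne_inl, fromBlocks_one_zero_single_one i j c⟩

/-- Vaserstein's lemma. -/
theorem fromBlocks_one_add_mul_zero_zero_mem (α : Matrix p q A) (β : Matrix q p A)
    (v : Matrix q q A) (hv : (1 + β * α) * v = 1) :
    fromBlocks (1 + α * β) 0 0 v ∈ ElemMats (p ⊕ q) A := by
  have hv' : v * (1 + β * α) = 1 := mul_eq_one_comm.1 hv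
  have hα : (1 + α * β) * (α * v) = α :=
    calc (1 + α * β) * (α * v) = α * ((1 + β * α) * v) := by
          simp only [Matrix.add_mul, Matrix.mul_add, Matrix.one_mul, Matrix.mul_assoc]
      _ = α := by rw [hv, Matrix.mul_one]
  have hβ : 1 - β * (α * v) = v := by
    rw [← hv, Matrix.add_mul, Matrix.one_mul, Matrix.mul_assoc, add_sub_cancel_right]
  have hdecomp : fromBlocks (1 + α * β) 0 0 v =
      fromBlocks 1 α 0 1 * fromBlocks 1 0 β 1 * fromBlocks 1 (-(α * v)) 0 1 *
        fromBlocks 1 0 (-((1 + β * α) * β)) 1 := by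
    simp only [fromBlocks_multiply, Matrix.mul_neg, Matrix.one_mul, Matrix.mul_one,
      Matrix.mul_zero, add_zero, zero_add]
    rw [hα, neg_add_cancel, neg_add_eq_sub, hβ, ← Matrix.mul_assoc v, hv', Matrix.one_mul,
      add_neg_cancel, Matrix.zero_mul, neg_zero, add_zero]
  rw [hdecomp]
  exact mul_mem (mul_mem (mul_mem (fromBlocks_unipotent_upper_mem _)
    (fromBlocks_unipotent_lower_mem _)) (fromBlocks_unipotent_upper_mem _))
    (fromBlocks_unipotent_lower_mem _)

theorem fromBlocks_fromBlocks_zero_zero_one_zero_zero_mem {S T : Matrix p p A}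
    (hST : S * T = 1) :
    fromBlocks (fromBlocks S 0 0 (1 : Matrix q q A)) 0 0 T ∈ ElemMats ((p ⊕ q) ⊕ p) A := by
  let α : Matrix (p ⊕ q) p A := fromRows (S - 1) 0
  let β : Matrix p (p ⊕ q) A := fromCols 1 0
  have hβα : 1 + β * α = S := by
    rw [fromCols_mul_fromRows, Matrix.one_mul, Matrix.zero_mul, add_zero, add_sub_cancel]
  have hαβ : 1 + α * β = fromBlocks S 0 0 (1 : Matrix q q A) := by
    rw [fromRows_mul_fromCols, ← fromBlocks_one, fromBlocks_add]
    simp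
  simpa only [hαβ] using fromBlocks_one_add_mul_zero_zero_mem α β T (hβα ▸ hST)

end ElemMats

/-- for `T ∈ GL_m(A)` and a unimodular `m × n` matrix `M` with right
inverse `N` (columns indexed by `Fin m ⊕ Fin k`, `n = m + k`), one has
`T M = M (Iₙ + N (T - I) M)`; stably, `Iₙ + N(T-I)M` and `T ⊥ I_{n-m}` lie in the same
coset of `E_{m+n}(A)`; in particular `TM` and `M (T ⊥ I_{n-m})` are in the same orbit
under `GLₙ(A) ∩ E_{m+n}(A)` acting by right multiplication. -/
theorem stmt5 {A : Type*} [CommRing A] {m k : ℕ}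
    (M : Matrix (Fin m) (Fin m ⊕ Fin k) A) (N : Matrix (Fin m ⊕ Fin k) (Fin m) A)
    (hMN : M * N = 1) (T : Matrix (Fin m) (Fin m) A) (hT : IsUnit T) :
    T * M = M * (1 + N * (T - 1) * M) ∧
    (∃ ε ∈ ElemMats ((Fin m ⊕ Fin k) ⊕ Fin m) A,
      Matrix.fromBlocks (1 + N * (T - 1) * M) 0 0 (1 : Matrix (Fin m) (Fin m) A) =
        Matrix.fromBlocks
          (Matrix.fromBlocks T 0 0 (1 : Matrix (Fin k) (Fin k) A)) 0 0
          (1 : Matrix (Fin m) (Fin m) A) * ε) ∧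
    (∃ g : Matrix (Fin m ⊕ Fin k) (Fin m ⊕ Fin k) A, IsUnit g ∧
      Matrix.fromBlocks g 0 0 (1 : Matrix (Fin m) (Fin m) A) ∈
        ElemMats ((Fin m ⊕ Fin k) ⊕ Fin m) A ∧
      T * M = M * Matrix.fromBlocks T 0 0 (1 : Matrix (Fin k) (Fin k) A) * g) := by
  have hTdet := (isUnit_iff_isUnit_det T).1 hT
  have hTM := mul_eq_mul_one_add_mul_sub_one_mul hMN T
  set u := 1 + N * (T - 1) * M
  have hu : fromBlocks u 0 0 T⁻¹ ∈ ElemMats ((Fin m ⊕ Fin k) ⊕ Fin m) A := by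
    have hβα : 1 + (T - 1) * M * N = T := by
      rw [Matrix.mul_assoc, hMN, Matrix.mul_one, add_sub_cancel]
    have := ElemMats.fromBlocks_one_add_mul_zero_zero_mem N ((T - 1) * M) T⁻¹
      (by rw [hβα, mul_nonsing_inv T hTdet])
    rwa [← Matrix.mul_assoc] at this
  have hdiag := ElemMats.fromBlocks_fromBlocks_zero_zero_one_zero_zero_mem (q := Fin k)
    (nonsing_inv_mul T hTdet)
  set g := fromBlocks T⁻¹ 0 0 (1 : Matrix (Fin k) (Fin k) A) * u
  have hg : fromBlocks g 0 0 (1 : Matrix (Fin m) (Fin m) A) ∈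
      ElemMats ((Fin m ⊕ Fin k) ⊕ Fin m) A := by
    convert mul_mem hdiag hu using 1
    simp [g, fromBlocks_multiply, mul_nonsing_inv T hTdet]
  have hTg : fromBlocks T 0 0 (1 : Matrix (Fin k) (Fin k) A) * g = u := by
    simp [g, ← Matrix.mul_assoc, fromBlocks_multiply, mul_nonsing_inv T hTdet]
  refine ⟨hTM, ⟨_, hg, ?_⟩, g, ElemMats.isUnit_of_fromBlocks_mem hg, hg, ?_⟩
  · simp [fromBlocks_multiply, hTg]
  · rw [Matrix.mul_assoc, hTg, hTM]
end

section
/- Let k be a field, let X be a trace-zero 2×2 matrix over k, Y a 2×2 matrix, and Z a 2×(n-4) matrix over k, such that the 2×n matrix (X | Y | Z) and the 2×n matrix (I-X | Y | Z) both have rank 2. Then the 2×n matrix (X(I-X) | (I-X)Y + YX | Z) also has rank 2. -/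
/-!
A `2 × n` matrix has rank 2 iff its columns span `k²`, so everything is a statement about
column spans. By Cayley–Hamilton a trace-zero `X` satisfies `X² = -det X • 1`, and
`det (X (1 - X)) = det X (1 + det X)`. If this is nonzero, `X (1 - X)` alone spans `k²`.
Otherwise `X² = 0` or `X² = 1`. The block `(1 - X) Y + Y X` equals `Y U + P V` for a unit `U`
and the first block `P` (`U = 1 + X`, `P = X` when `X² = 0`; `U = X`, `P = 1 - X` when `X² = 1`),
and `X (1 - X)` has the same column span as `P`; so the column span of the new matrix is that of
`(X | Y | Z)`, resp. `(1 - X | Y | Z)`.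
-/

open Matrix

namespace Matrix

section ColumnSpace

variable {R : Type*} [CommRing R] {l m n p : Type*} [Fintype m] [Fintype n] [Fintype p]

theorem range_mulVecLin_fromCols (A : Matrix l m R) (B : Matrix l n R) :
    LinearMap.range (fromCols A B).mulVecLin =
      LinearMap.range A.mulVecLin ⊔ LinearMap.range B.mulVecLin := by
  have hcol : (fromCols A B).col = Sum.elim A.col B.col := by
    ext (j | j) i <;> rfl
  rw [range_mulVecLin, range_mulVecLin, range_mulVecLin, hcol, Set.Sum.elim_range,
    Submodule.span_union]

theorem range_mulVecLin_mul_le (A : Matrix l m R) (B : Matrix m n R) :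
    LinearMap.range (A * B).mulVecLin ≤ LinearMap.range A.mulVecLin := by
  rw [mulVecLin_mul]
  exact LinearMap.range_comp_le_range _ _

theorem range_mulVecLin_mul_of_isUnit [DecidableEq n] (A : Matrix l n R) {U : Matrix n n R}
    (hU : IsUnit U) : LinearMap.range (A * U).mulVecLin = LinearMap.range A.mulVecLin := by
  rw [mulVecLin_mul, LinearMap.range_comp_of_range_eq_top]
  exact LinearMap.range_eq_top.mpr (mulVec_surjective_iff_isUnit.mpr hU)

theorem range_mulVecLin_add_le (A B : Matrix l m R) :
    LinearMap.range (A + B).mulVecLin ≤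
      LinearMap.range A.mulVecLin ⊔ LinearMap.range B.mulVecLin := by
  rw [mulVecLin_add]
  exact LinearMap.range_add_le _ _

theorem sup_range_mulVecLin_mul_add_mul [DecidableEq p] (P : Matrix l n R) (Q : Matrix l p R)
    (V : Matrix n p R) {U : Matrix p p R} (hU : IsUnit U) :
    LinearMap.range P.mulVecLin ⊔ LinearMap.range (Q * U + P * V).mulVecLin =
      LinearMap.range P.mulVecLin ⊔ LinearMap.range Q.mulVecLin := by
  refine le_antisymm (sup_le le_sup_left ?_) (sup_le le_sup_left ?_)
  · refine (range_mulVecLin_add_le _ _).trans (sup_le ?_ ?_)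
    · exact (range_mulVecLin_mul_le _ _).trans le_sup_right
    · exact (range_mulVecLin_mul_le _ _).trans le_sup_left
  · calc LinearMap.range Q.mulVecLin = LinearMap.range (Q * U).mulVecLin :=
          (range_mulVecLin_mul_of_isUnit Q hU).symm
      _ = LinearMap.range ((Q * U + P * V) + P * -V).mulVecLin := by
          rw [Matrix.mul_neg, add_neg_cancel_right]
      _ ≤ _ := (range_mulVecLin_add_le _ _).trans (sup_le le_sup_right
          ((range_mulVecLin_mul_le _ _).trans le_sup_left))

variable [DecidableEq n]

theorem sup_range_mulVecLin_of_mul_self_eq_zero {X : Matrix n n R} (hX : X * X = 0)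
    (Y : Matrix n n R) :
    LinearMap.range (X * (1 - X)).mulVecLin ⊔ LinearMap.range ((1 - X) * Y + Y * X).mulVecLin =
      LinearMap.range X.mulVecLin ⊔ LinearMap.range Y.mulVecLin := by
  have hXX : X * (1 - X) = X := by rw [Matrix.mul_sub, hX, Matrix.mul_one, sub_zero]
  have hunit : IsUnit (1 + X) := by
    have h₁ : (1 + X) * (1 - X) = 1 - X * X := by noncomm_ring
    have h₂ : (1 - X) * (1 + X) = 1 - X * X := by noncomm_ring
    rw [hX, sub_zero] at h₁ h₂
    exact isUnit_iff_exists.mpr ⟨1 - X, h₁, h₂⟩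
  have hY : (1 - X) * Y + Y * X = Y * (1 + X) + X * -Y := by noncomm_ring
  rw [hXX, hY, sup_range_mulVecLin_mul_add_mul X Y (-Y) hunit]

theorem sup_range_mulVecLin_of_mul_self_eq_one {X : Matrix n n R} (hX : X * X = 1)
    (Y : Matrix n n R) :
    LinearMap.range (X * (1 - X)).mulVecLin ⊔ LinearMap.range ((1 - X) * Y + Y * X).mulVecLin =
      LinearMap.range (1 - X).mulVecLin ⊔ LinearMap.range Y.mulVecLin := by
  have hXX : X * (1 - X) = (1 - X) * -1 := by
    rw [Matrix.mul_sub, hX, Matrix.mul_one, mul_neg_one, neg_sub]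
  have hY : (1 - X) * Y + Y * X = Y * X + (1 - X) * Y := add_comm _ _
  rw [hXX, hY, range_mulVecLin_mul_of_isUnit _ (isUnit_neg_one (α := Matrix n n R)),
    sup_range_mulVecLin_mul_add_mul (1 - X) Y Y (isUnit_iff_exists.mpr ⟨X, hX, hX⟩)]

end ColumnSpace

theorem rank_eq_card_iff_range_mulVecLin_eq_top {k : Type*} [Field k] {m n : Type*} [Fintype m]
    [Fintype n] (A : Matrix m n k) :
    A.rank = Fintype.card m ↔ LinearMap.range A.mulVecLin = ⊤ := by
  rw [rank, ← Module.finrank_fintype_fun_eq_card (R := k)]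
  exact ⟨Submodule.eq_top_of_finrank_eq, fun h => by rw [h, finrank_top]⟩

variable {R : Type*} [CommRing R]

theorem mul_self_eq_neg_det_smul_one_of_trace_eq_zero {X : Matrix (Fin 2) (Fin 2) R}
    (hX : X.trace = 0) : X * X = -X.det • (1 : Matrix (Fin 2) (Fin 2) R) := by
  have h : X 1 1 = -X 0 0 := by rw [trace_fin_two] at hX; linear_combination hX
  ext i j
  fin_cases i <;> fin_cases j <;> simp [mul_apply, det_fin_two, h] <;> ring

theorem det_one_sub_of_trace_eq_zero {X : Matrix (Fin 2) (Fin 2) R} (hX : X.trace = 0) :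
    (1 - X).det = 1 + X.det := by
  rw [trace_fin_two] at hX
  simp only [det_fin_two, sub_apply, one_apply_eq, one_apply_ne Fin.zero_ne_one,
    one_apply_ne Fin.zero_ne_one.symm]
  linear_combination -hX

end Matrix

/-- over a field, if the `2 × n` block matrices `(X | Y | Z)` and
`(I - X | Y | Z)` both have rank 2, where `X` is a trace-zero `2 × 2` matrix, then
`(X(I-X) | (I-X)Y + YX | Z)` also has rank 2. -/
theorem stmt7 {k : Type*} [Field k] {m : ℕ}
    (X Y : Matrix (Fin 2) (Fin 2) k) (Z : Matrix (Fin 2) (Fin m) k)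
    (hX : X.trace = 0)
    (h1 : (Matrix.fromCols X (Matrix.fromCols Y Z)).rank = 2)
    (h2 : (Matrix.fromCols (1 - X) (Matrix.fromCols Y Z)).rank = 2) :
    (Matrix.fromCols (X * (1 - X))
      (Matrix.fromCols ((1 - X) * Y + Y * X) Z)).rank = 2 := by
  have rank_eq_two_iff {n : Type} [Fintype n] (A : Matrix (Fin 2) n k) :
      A.rank = 2 ↔ LinearMap.range A.mulVecLin = ⊤ := by
    simpa using rank_eq_card_iff_range_mulVecLin_eq_top A
  simp only [rank_eq_two_iff, range_mulVecLin_fromCols, ← sup_assoc] at h1 h2 ⊢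
  by_cases hunit : IsUnit (X * (1 - X))
  · rw [LinearMap.range_eq_top.mpr (mulVec_surjective_iff_isUnit.mpr hunit), top_sup_eq,
      top_sup_eq]
  have hdet : X.det = 0 ∨ X.det = -1 := by
    rwa [isUnit_iff_isUnit_det, det_mul, det_one_sub_of_trace_eq_zero hX, isUnit_iff_ne_zero,
      not_not, mul_eq_zero, add_eq_zero_iff_neg_eq', neg_eq_iff_eq_neg] at hunit
  rcases hdet with hdet | hdet
  · have hXX : X * X = 0 := by
      rw [mul_self_eq_neg_det_smul_one_of_trace_eq_zero hX, hdet, neg_zero, zero_smul]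
    rwa [sup_range_mulVecLin_of_mul_self_eq_zero hXX]
  · have hXX : X * X = 1 := by
      rw [mul_self_eq_neg_det_smul_one_of_trace_eq_zero hX, hdet, neg_neg, one_smul]
    rwa [sup_range_mulVecLin_of_mul_self_eq_one hXX]
end

section
/- Let A be a commutative noetherian ring of Krull dimension d ≤ 2n-5, n ≥ 4. If [T] = [M] * [N] in the sense of the partially defined operation (representatives (X|Y|Z), (I-X|Y|Z), (X(I-X)|(I-X)Y+YX|Z) with X trace-zero 2×2), then Row_1([T]) = Row_1([M]) · Row_1([N]) in the group Um_n(A)/E_n(A). -/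
/-!
Elementary column operations, together with `X 1 1 = -X 0 0` (trace zero), move the first rows of
`M = (X | Y | Z)` and `N = (I - X | Y | Z)` to rows that agree with the first row `r` of
`(X | (I - X)Y + YX | Z)` off the first coordinate, with first entries `X 0 0` and `1 - X 0 0`.
Since `X² = -det X • I`, one more operation turns the first row of `T` into `r` with first entry
`X 0 0 * (1 - X 0 0)`. MS1 makes the symbol invariant under these moves, and MS3 applies to `r`
because `X 0 0 + (1 - X 0 0) = 1`.
-/

open Matrix

section

variable {A : Type*} [CommRing A] {ι : Type*}

theorem Unim.of_mul_eq_one [DecidableEq ι] {κ : Type*} [Fintype κ] {M : Matrix ι κ A}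
    {M' : Matrix κ ι A} (h : M * M' = 1) (i : ι) : Unim (M i) := by
  rw [Unim, Ideal.eq_top_iff_one, Ideal.mem_span_range_iff_exists_fun]
  refine ⟨fun j => M' j i, ?_⟩
  simpa [mul_apply, mul_comm] using congrFun (congrFun h i) i

variable [Fintype ι]

theorem Ideal.span_range_vecMul_le {κ : Type*} (v : ι → A) (P : Matrix ι κ A) :
    Ideal.span (Set.range (v ᵥ* P)) ≤ Ideal.span (Set.range v) := by
  rw [Ideal.span_le]
  rintro _ ⟨k, rfl⟩
  exact Ideal.sum_mem _ fun i _ => Ideal.mul_mem_right _ _ (Ideal.subset_span ⟨i, rfl⟩)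

theorem Unim.vecMul_of_isUnit [DecidableEq ι] {v : ι → A} (hv : Unim v) {P : Matrix ι ι A}
    (hP : IsUnit P) : Unim (v ᵥ* P) := by
  obtain ⟨Q, hQ⟩ := hP.exists_right_inv
  rw [Unim, eq_top_iff, ← hv]
  calc Ideal.span (Set.range v) = Ideal.span (Set.range (v ᵥ* P ᵥ* Q)) := by
        rw [vecMul_vecMul, hQ, vecMul_one]
    _ ≤ _ := Ideal.span_range_vecMul_le _ _

variable [DecidableEq ι]

theorem vecMul_transvection (v : ι → A) {i j : ι} (hij : i ≠ j) (c : A) :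
    v ᵥ* transvection i j c = Function.update v j (v j + v i * c) := by
  ext k
  rw [transvection, vecMul_add, vecMul_one, Pi.add_apply, Function.update_apply]
  split_ifs with hk
  · subst hk; simp [vecMul, dotProduct, single_apply]
  · simp [vecMul, dotProduct, Ne.symm hk]

theorem ElemMats.transvection_mem {i j : ι} (hij : i ≠ j) (c : A) :
    transvection i j c ∈ ElemMats ι A :=
  Submonoid.subset_closure ⟨i, j, c, hij, rfl⟩

theorem ElemMats.isUnit {ε : Matrix ι ι A} (hε : ε ∈ ElemMats ι A) : IsUnit ε := by
  refine (Submonoid.closure_le (S := IsUnit.submonoid _)).2 ?_ hε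
  rintro _ ⟨i, j, c, hij, rfl⟩
  exact (isUnit_iff_isUnit_det _).2 (by simp [det_transvection_of_ne i j hij])

def ElemReachable (v w : ι → A) : Prop :=
  ∃ ε ∈ ElemMats ι A, v ᵥ* ε = w

namespace ElemReachable

variable {v w : ι → A}

theorem refl (v : ι → A) : ElemReachable v v :=
  ⟨1, one_mem _, vecMul_one v⟩

theorem update_add (h : ElemReachable v w) {i j : ι} (hij : i ≠ j) (c : A) :
    ElemReachable v (Function.update w j (w j + w i * c)) := by
  obtain ⟨ε, hε, rfl⟩ := h
  exact ⟨ε * transvection i j c, mul_mem hε (ElemMats.transvection_mem hij c),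
    by rw [← vecMul_vecMul, vecMul_transvection _ hij]⟩

theorem unim (h : ElemReachable v w) (hv : Unim v) : Unim w := by
  obtain ⟨ε, hε, rfl⟩ := h
  exact hv.vecMul_of_isUnit (ElemMats.isUnit hε)

theorem trans {u : ι → A} (h₁ : ElemReachable u v) (h₂ : ElemReachable v w) :
    ElemReachable u w := by
  obtain ⟨ε₁, hε₁, rfl⟩ := h₁
  obtain ⟨ε₂, hε₂, rfl⟩ := h₂
  exact ⟨ε₁ * ε₂, mul_mem hε₁ hε₂, (vecMul_vecMul _ _ _).symm⟩

theorem rotate {i j : ι} (hij : i ≠ j) :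
    ElemReachable v (Function.update (Function.update v i (-v j)) j (v i)) := by
  convert (((refl v).update_add hij 1).update_add hij.symm (-1)).update_add hij 1 using 1
  ext k
  by_cases hkj : k = j
  · simp [hkj, hij, hij.symm]
  by_cases hki : k = i <;> simp [hkj, hki, hij]

theorem neg_pair {i j : ι} (hij : i ≠ j) :
    ElemReachable v (Function.update (Function.update v i (-v i)) j (-v j)) := by
  convert (rotate hij).trans (rotate hij) using 1
  ext k
  by_cases hkj : k = j
  · simp [hkj, hij]
  by_cases hki : k = i <;> simp [hkj, hki, hij]

end ElemReachable

end

section TwoByTwoBlocks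

variable {A : Type*} [CommRing A] {κ : Type*} [Fintype κ] [DecidableEq κ]
  {X : Matrix (Fin 2) (Fin 2) A} (Y : Matrix (Fin 2) (Fin 2) A) (Z : Matrix (Fin 2) κ A)

theorem Matrix.apply_one_one_eq_neg_of_trace_eq_zero (hX : X.trace = 0) : X 1 1 = -X 0 0 := by
  rw [trace_fin_two] at hX
  linear_combination hX

theorem elemReachable_fromCols_sub_commutator (hX : X.trace = 0) :
    ElemReachable (fromCols X (fromCols Y Z) 0)
      (fromCols X (fromCols ((1 - X) * Y + Y * X) Z) 0) := by
  convert (ElemReachable.refl (fromCols X (fromCols Y Z) 0)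
    |>.update_add (i := Sum.inr (Sum.inl 1)) (j := Sum.inr (Sum.inl 0)) (by simp) (X 1 0)
    |>.update_add (i := Sum.inl 1) (j := Sum.inr (Sum.inl 0)) (by simp) (-Y 1 0)
    |>.update_add (i := Sum.inl 0) (j := Sum.inr (Sum.inl 1)) (by simp) (-(2 * Y 0 1))
    |>.update_add (i := Sum.inl 1) (j := Sum.inr (Sum.inl 1)) (by simp) (Y 0 0 - Y 1 1)) using 1
  ext (k | k | k)
  all_goals try fin_cases k
  all_goals simp [mul_apply, Fin.sum_univ_two, apply_one_one_eq_neg_of_trace_eq_zero hX]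
  all_goals ring

-- The target is the first row of `((I - X) diag(1, -1) | (I - X)Y + YX | Z)`; the sign change
-- of `X 0 1` is elementary only together with that of `Y 0 1`, which the later steps absorb.
theorem elemReachable_fromCols_one_sub (hX : X.trace = 0) :
    ElemReachable (fromCols (1 - X) (fromCols Y Z) 0)
      (Function.update (fromCols X (fromCols ((1 - X) * Y + Y * X) Z) 0) (Sum.inl 0)
        (1 - X 0 0)) := by
  convert (ElemReachable.neg_pair (v := fromCols (1 - X) (fromCols Y Z) 0)
      (i := Sum.inl 1) (j := Sum.inr (Sum.inl 1)) (by simp)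
    |>.update_add (i := Sum.inr (Sum.inl 1)) (j := Sum.inr (Sum.inl 0)) (by simp) (-X 1 0)
    |>.update_add (i := Sum.inl 1) (j := Sum.inr (Sum.inl 0)) (by simp) (-Y 1 0)
    |>.update_add (i := Sum.inl 0) (j := Sum.inr (Sum.inl 1)) (by simp) (2 * Y 0 1)
    |>.update_add (i := Sum.inl 1) (j := Sum.inr (Sum.inl 1)) (by simp) (Y 0 0 - Y 1 1)) using 1
  ext (k | k | k)
  all_goals try fin_cases k
  all_goals simp [mul_apply, Fin.sum_univ_two, apply_one_one_eq_neg_of_trace_eq_zero hX]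
  all_goals ring

theorem elemReachable_fromCols_mul_one_sub (hX : X.trace = 0) :
    ElemReachable (fromCols (X * (1 - X)) (fromCols Y Z) 0)
      (Function.update (fromCols X (fromCols Y Z) 0) (Sum.inl 0) (X 0 0 * (1 - X 0 0))) := by
  convert (ElemReachable.refl (fromCols (X * (1 - X)) (fromCols Y Z) 0)).update_add
    (i := Sum.inl 1) (j := Sum.inl 0) (by simp) (X 1 0) using 1
  ext (k | k | k)
  all_goals try fin_cases k
  all_goals simp [mul_apply, Fin.sum_univ_two, apply_one_one_eq_neg_of_trace_eq_zero hX]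
  all_goals ring

end TwoByTwoBlocks

theorem stmt18_general {A G : Type*} [CommRing A] [CommGroup G] {m : ℕ}
    (wms : ((Fin 2 ⊕ (Fin 2 ⊕ Fin m)) → A) → G)
    (hMS1 : ∀ v : (Fin 2 ⊕ (Fin 2 ⊕ Fin m)) → A, Unim v →
      ∀ ε ∈ ElemMats (Fin 2 ⊕ (Fin 2 ⊕ Fin m)) A, wms (Matrix.vecMul v ε) = wms v)
    (hMS3 : ∀ (x y : A) (a : (Fin 2 ⊕ (Fin 2 ⊕ Fin m)) → A), x + y = 1 →
      Unim (Function.update a (Sum.inl 0) x) → Unim (Function.update a (Sum.inl 0) y) →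
      wms (Function.update a (Sum.inl 0) (x * y)) =
        wms (Function.update a (Sum.inl 0) x) * wms (Function.update a (Sum.inl 0) y))
    (X Y : Matrix (Fin 2) (Fin 2) A) (Z : Matrix (Fin 2) (Fin m) A)
    (hX : X.trace = 0)
    (hM : ∃ M' : Matrix (Fin 2 ⊕ (Fin 2 ⊕ Fin m)) (Fin 2) A,
      Matrix.fromCols X (Matrix.fromCols Y Z) * M' = 1)
    (hN : ∃ N' : Matrix (Fin 2 ⊕ (Fin 2 ⊕ Fin m)) (Fin 2) A,
      Matrix.fromCols (1 - X) (Matrix.fromCols Y Z) * N' = 1)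
    (hT : ∃ T' : Matrix (Fin 2 ⊕ (Fin 2 ⊕ Fin m)) (Fin 2) A,
      Matrix.fromCols (X * (1 - X))
        (Matrix.fromCols ((1 - X) * Y + Y * X) Z) * T' = 1) :
    wms (Matrix.fromCols (X * (1 - X))
        (Matrix.fromCols ((1 - X) * Y + Y * X) Z) 0) =
      wms (Matrix.fromCols X (Matrix.fromCols Y Z) 0) *
      wms (Matrix.fromCols (1 - X) (Matrix.fromCols Y Z) 0) := by
  obtain ⟨M', hM⟩ := hM
  obtain ⟨N', hN⟩ := hN
  obtain ⟨T', hT⟩ := hT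
  have hwms : ∀ {v w}, Unim v → ElemReachable v w → wms w = wms v := by
    rintro v _ hv ⟨ε, hε, rfl⟩
    exact hMS1 v hv ε hε
  set r := fromCols X (fromCols ((1 - X) * Y + Y * X) Z) 0
  have hr : Function.update r (Sum.inl 0) (X 0 0) = r := Function.update_eq_self_iff.2 rfl
  have hMr : ElemReachable _ r := elemReachable_fromCols_sub_commutator Y Z hX
  have hNr := elemReachable_fromCols_one_sub Y Z hX
  have hTr := elemReachable_fromCols_mul_one_sub ((1 - X) * Y + Y * X) Z hX
  have umM := Unim.of_mul_eq_one hM 0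
  have umN := Unim.of_mul_eq_one hN 0
  have umT := Unim.of_mul_eq_one hT 0
  calc _ = wms (Function.update r (Sum.inl 0) (X 0 0 * (1 - X 0 0))) := (hwms umT hTr).symm
    _ = wms (Function.update r (Sum.inl 0) (X 0 0)) *
        wms (Function.update r (Sum.inl 0) (1 - X 0 0)) :=
      hMS3 _ _ _ (add_sub_cancel _ _) (by rw [hr]; exact hMr.unim umM) (hNr.unim umN)
    _ = _ := by rw [hr, hwms umM hMr, hwms umN hNr]

/-- `A` commutative noetherian of Krull dimension `d ≤ 2n - 5`,
`n = m + 4 ≥ 4` (columns indexed by `Fin 2 ⊕ (Fin 2 ⊕ Fin m)`), `wms` the weak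
Mennicke symbol on rows (satisfying MS1 and MS3, taken at the first coordinate).
If `[T] = [M] * [N]`, i.e. `M, N, T` have the representative shapes `(X | Y | Z)`,
`(I - X | Y | Z)` and `(X(I-X) | (I-X)Y + YX | Z)` with `X` trace-zero `2 × 2`
and all three matrices unimodular, then
`Row₁([T]) = Row₁([M]) · Row₁([N])` in `Um_n(A)/E_n(A)`. -/
theorem stmt18 {A G : Type*} [CommRing A] [IsNoetherianRing A] [CommGroup G] {d m : ℕ}
    (hd : ringKrullDim A ≤ d) (hd2 : 2 ≤ d) (hdn : d + 5 ≤ 2 * (m + 4))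
    (wms : ((Fin 2 ⊕ (Fin 2 ⊕ Fin m)) → A) → G)
    (hMS1 : ∀ v : (Fin 2 ⊕ (Fin 2 ⊕ Fin m)) → A, Unim v →
      ∀ ε ∈ ElemMats (Fin 2 ⊕ (Fin 2 ⊕ Fin m)) A, wms (Matrix.vecMul v ε) = wms v)
    (hMS3 : ∀ (x y : A) (a : (Fin 2 ⊕ (Fin 2 ⊕ Fin m)) → A), x + y = 1 →
      Unim (Function.update a (Sum.inl 0) x) → Unim (Function.update a (Sum.inl 0) y) →
      wms (Function.update a (Sum.inl 0) (x * y)) =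
        wms (Function.update a (Sum.inl 0) x) * wms (Function.update a (Sum.inl 0) y))
    (X Y : Matrix (Fin 2) (Fin 2) A) (Z : Matrix (Fin 2) (Fin m) A)
    (hX : X.trace = 0)
    (hM : ∃ M' : Matrix (Fin 2 ⊕ (Fin 2 ⊕ Fin m)) (Fin 2) A,
      Matrix.fromCols X (Matrix.fromCols Y Z) * M' = 1)
    (hN : ∃ N' : Matrix (Fin 2 ⊕ (Fin 2 ⊕ Fin m)) (Fin 2) A,
      Matrix.fromCols (1 - X) (Matrix.fromCols Y Z) * N' = 1)
    (hT : ∃ T' : Matrix (Fin 2 ⊕ (Fin 2 ⊕ Fin m)) (Fin 2) A,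
      Matrix.fromCols (X * (1 - X))
        (Matrix.fromCols ((1 - X) * Y + Y * X) Z) * T' = 1) :
    wms (Matrix.fromCols (X * (1 - X))
        (Matrix.fromCols ((1 - X) * Y + Y * X) Z) 0) =
      wms (Matrix.fromCols X (Matrix.fromCols Y Z) 0) *
      wms (Matrix.fromCols (1 - X) (Matrix.fromCols Y Z) 0) :=
  stmt18_general wms hMS1 hMS3 X Y Z hX hM hN hT
end
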